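/- Let α be a real number with α ∉ ℤ. The sequence (c^{(n)})_{n=0}^∞ is a Schauder basis of c₀(Δ^(α)): every x ∈ c₀(Δ^(α)) has the representation x = ∑_{n=0}^∞ (Δ^(α)x)_n · c^{(n)}, with the series converging in the norm ‖x‖ = sup_m |(Δ^(α)x)_m|, and this is the unique representation of x as a norm-convergent series ∑_n λ_n c^{(n)} with real scalars λ_n. -/

import Mathlib

open Filter Finset Topology

/-- The fractional difference matrix `Δ^(α)`. -/
noncomputable def fracDelta (α : ℝ) (n k : ℕ) : ℝ :=
  if k ≤ n then
    (-1 : ℝ) ^ (n - k) * Real.Gamma (α + 1) /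
      ((Nat.factorial (n - k) : ℝ) * Real.Gamma (α - n + k + 1))
  else 0

/-- `(Δ^(α)x)_n = ∑_{k=0}^n Δ^(α)_{nk} x_k`. -/
noncomputable def fracDeltaSeq (α : ℝ) (x : ℕ → ℝ) (n : ℕ) : ℝ :=
  ∑ k ∈ Finset.range (n + 1), fracDelta α n k * x k

/-- Membership in `c₀(Δ^(α))`. -/
def memC0Delta (α : ℝ) (x : ℕ → ℝ) : Prop :=
  Tendsto (fracDeltaSeq α x) atTop (nhds 0)

/-- The norm `‖x‖ = sup_m |(Δ^(α)x)_m|`. -/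
noncomputable def deltaNorm (α : ℝ) (x : ℕ → ℝ) : ℝ :=
  ⨆ m, |fracDeltaSeq α x m|

/-- The basis sequence `c^{(n)}`: `c^{(n)}_k = 0` for `k < n` and
`c^{(n)}_k = (−1)^{k−n} Γ(−α+1)/((k−n)!·Γ(−α+n−k+1))` for `k ≥ n`;
it is the `n`-th column of `Δ^(−α)`. -/
noncomputable def cBasis (α : ℝ) (n k : ℕ) : ℝ := fracDelta (-α) k n

/-!
For `α ∉ ℤ` the Gamma quotients are generalized binomial coefficients,
`Δ^(α)_{nk} = (-1)^{n-k} (α choose n-k)`, and the Chu–Vandermonde identity for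
`α + (-α) = 0` gives `Δ^(α) Δ^(-α) = I`, i.e. `Δ^(α) c^{(n)} = e_n`. Hence `Δ^(α)` carries
`x - ∑_{n<m} λ_n c^{(n)}` to `Δ^(α)x - (λ_0, …, λ_{m-1}, 0, 0, …)`, and the statement reduces to
the fact that the unit vectors form a Schauder basis of `c₀` with the sup norm.
-/

section SequenceSpace

variable {a l : ℕ → ℝ}

lemma tendsto_iSup_abs_sub_truncation (ha : Tendsto a atTop (𝓝 0)) :
    Tendsto (fun m => ⨆ j, |a j - if j < m then a j else 0|) atTop (𝓝 0) := by
  rw [Metric.tendsto_atTop] at ha ⊢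
  intro ε hε
  obtain ⟨M, hM⟩ := ha (ε / 2) (half_pos hε)
  refine ⟨M, fun m hm => ?_⟩
  have htail : ∀ j, |a j - if j < m then a j else 0| ≤ ε / 2 := by
    intro j
    split_ifs with hj
    · simpa using (half_pos hε).le
    · simpa [Real.dist_eq] using (hM j (by omega)).le
  have hsup := Real.iSup_le htail (half_pos hε).le
  rw [Real.dist_eq, sub_zero, abs_of_nonneg (Real.iSup_nonneg fun _ => abs_nonneg _)]
  linarith

lemma abs_sub_le_iSup_abs_sub_truncation (ha : Tendsto a atTop (𝓝 0)) {n m : ℕ} (hnm : n < m) :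
    |a n - l n| ≤ ⨆ j, |a j - if j < m then l j else 0| := by
  have htrunc : Tendsto (fun j => if j < m then l j else 0) atTop (𝓝 0) :=
    tendsto_const_nhds.congr' <| by
      filter_upwards [eventually_ge_atTop m] with j hj
      rw [if_neg (by omega)]
  have hbdd := ((ha.sub htrunc).abs).bddAbove_range
  simpa [hnm] using le_ciSup hbdd n

lemma eq_of_tendsto_iSup_abs_sub_truncation (ha : Tendsto a atTop (𝓝 0))
    (hl : Tendsto (fun m => ⨆ j, |a j - if j < m then l j else 0|) atTop (𝓝 0)) : l = a := by
  funext n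
  have hle : |a n - l n| ≤ 0 :=
    ge_of_tendsto hl <| (eventually_gt_atTop n).mono fun m hm =>
      abs_sub_le_iSup_abs_sub_truncation ha hm
  linarith [abs_nonpos_iff.mp hle]

end SequenceSpace

lemma Ring.sum_range_choose_neg_mul_choose {R : Type*} [Ring R] [BinomialRing R] (r : R)
    (N : ℕ) :
    ∑ i ∈ range (N + 1), choose (-r) i * choose r (N - i) = if N = 0 then 1 else 0 := by
  have h := add_choose_eq N ((Commute.refl r).neg_left)
  rw [neg_add_cancel, choose_zero_ite, Finset.Nat.sum_antidiagonal_eq_sum_range_succ_mk] at h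
  exact h.symm

section FracDelta

variable {α : ℝ}

lemma Gamma_add_one_eq_smeval_descPochhammer_mul (hα : ∀ j : ℕ, α ≠ j) (m : ℕ) :
    Real.Gamma (α + 1) = (descPochhammer ℤ m).smeval α * Real.Gamma (α - m + 1) := by
  induction m with
  | zero => simp
  | succ m ih =>
    have hne : α - m ≠ 0 := sub_ne_zero.mpr (by exact_mod_cast hα m)
    rw [ih, descPochhammer_succ_right, Polynomial.smeval_mul, Polynomial.smeval_sub,
      Polynomial.smeval_X, Polynomial.smeval_natCast, show α - ↑(m + 1) + 1 = α - m by
        push_cast; ring, Real.Gamma_add_one hne]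
    simp only [pow_one, pow_zero, nsmul_eq_mul, mul_one]
    ring

lemma Gamma_sub_nat_add_one_ne_zero (hα : ∀ j : ℤ, α ≠ j) (m : ℕ) : Real.Gamma (α - m + 1) ≠ 0 :=
  Real.Gamma_ne_zero fun j h => hα (m - 1 - j) (by push_cast; linarith)

lemma fracDelta_eq_neg_one_pow_mul_choose (hα : ∀ j : ℤ, α ≠ j) {n k : ℕ} (h : k ≤ n) :
    fracDelta α n k = (-1) ^ (n - k) * Ring.choose α (n - k) := by
  have hΓ := Gamma_sub_nat_add_one_ne_zero hα (n - k)
  rw [fracDelta, if_pos h, show α - n + k = α - ↑(n - k) by rw [Nat.cast_sub h]; ring,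
    Gamma_add_one_eq_smeval_descPochhammer_mul (fun j => hα j) (n - k),
    Ring.descPochhammer_eq_factorial_smul_choose, nsmul_eq_mul]
  field_simp

lemma fracDelta_of_lt {n k : ℕ} (h : n < k) : fracDelta α n k = 0 :=
  if_neg h.not_ge

lemma fracDeltaSeq_sub (x y : ℕ → ℝ) (j : ℕ) :
    fracDeltaSeq α (x - y) j = fracDeltaSeq α x j - fracDeltaSeq α y j := by
  simp only [fracDeltaSeq, Pi.sub_apply, mul_sub, sum_sub_distrib]

lemma fracDeltaSeq_sum_mul {ι : Type*} (s : Finset ι) (l : ι → ℝ) (y : ι → ℕ → ℝ)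
    (j : ℕ) :
    fracDeltaSeq α (fun k => ∑ n ∈ s, l n * y n k) j = ∑ n ∈ s, l n * fracDeltaSeq α (y n) j := by
  simp only [fracDeltaSeq, mul_sum]
  rw [sum_comm]
  exact sum_congr rfl fun _ _ => sum_congr rfl fun _ _ => by ring

lemma fracDeltaSeq_cBasis (hα : ∀ j : ℤ, α ≠ j) (n m : ℕ) :
    fracDeltaSeq α (cBasis α n) m = if m = n then 1 else 0 := by
  have hα' : ∀ j : ℤ, -α ≠ j := fun j h => hα (-j) (by push_cast; linarith)
  rcases lt_or_ge m n with hmn | hnm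
  · rw [if_neg hmn.ne]
    refine sum_eq_zero fun k hk => ?_
    rw [cBasis, fracDelta_of_lt (k := n) (by simp only [mem_range] at hk; omega), mul_zero]
  · obtain ⟨N, rfl⟩ := Nat.exists_eq_add_of_le hnm
    have hterm : ∀ i ∈ range (N + 1), fracDelta α (n + N) (n + i) * cBasis α n (n + i) =
        (-1) ^ N * (Ring.choose (-α) i * Ring.choose α (N - i)) := by
      intro i hi
      have hiN : i ≤ N := Nat.lt_succ_iff.mp (mem_range.mp hi)
      rw [cBasis, fracDelta_eq_neg_one_pow_mul_choose hα (by omega),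
        fracDelta_eq_neg_one_pow_mul_choose hα' (by omega), Nat.add_sub_add_left,
        Nat.add_sub_cancel_left, ← Nat.sub_add_cancel hiN, pow_add, Nat.add_sub_cancel]
      ring
    rw [fracDeltaSeq, show n + N + 1 = n + (N + 1) by ring, sum_range_add,
      sum_eq_zero fun k hk => by rw [cBasis, fracDelta_of_lt (mem_range.mp hk), mul_zero],
      zero_add, sum_congr rfl hterm, ← mul_sum, Ring.sum_range_choose_neg_mul_choose]
    by_cases hN : N = 0 <;> simp [hN]

lemma fracDeltaSeq_sub_sum_mul_cBasis (hα : ∀ j : ℤ, α ≠ j) (x l : ℕ → ℝ) (m j : ℕ) :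
    fracDeltaSeq α (x - fun k => ∑ n ∈ range m, l n * cBasis α n k) j =
      fracDeltaSeq α x j - if j < m then l j else 0 := by
  simp only [fracDeltaSeq_sub, fracDeltaSeq_sum_mul, fracDeltaSeq_cBasis hα, mul_ite, mul_one,
    mul_zero, sum_ite_eq, mem_range]

lemma deltaNorm_sub_sum_mul_cBasis (hα : ∀ j : ℤ, α ≠ j) (x l : ℕ → ℝ) (m : ℕ) :
    deltaNorm α (x - fun k => ∑ n ∈ range m, l n * cBasis α n k) =
      ⨆ j, |fracDeltaSeq α x j - if j < m then l j else 0| := by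
  simp only [deltaNorm, fracDeltaSeq_sub_sum_mul_cBasis hα]

end FracDelta

/-- `(c^{(n)})_{n=0}^∞` is a Schauder basis of `c₀(Δ^(α))`, and every
`x ∈ c₀(Δ^(α))` has the unique representation `x = ∑_n (Δ^(α)x)_n c^{(n)}`. -/
theorem schauder_basis_c0Delta (α : ℝ) (hα : ∀ m : ℤ, α ≠ (m : ℝ)) :
    (∀ n : ℕ, memC0Delta α (fun k => cBasis α n k)) ∧
    ∀ x : ℕ → ℝ, memC0Delta α x →
      (Tendsto
        (fun m => deltaNorm α (x - fun j => ∑ n ∈ Finset.range m, fracDeltaSeq α x n * cBasis α n j))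
        atTop (nhds 0)) ∧
      (∀ l : ℕ → ℝ,
        Tendsto
          (fun m => deltaNorm α (x - fun j => ∑ n ∈ Finset.range m, l n * cBasis α n j))
          atTop (nhds 0) →
        l = fun n => fracDeltaSeq α x n) := by
  refine ⟨fun n => ?_, fun x hx => ⟨?_, fun l hl => ?_⟩⟩
  · refine tendsto_const_nhds.congr' <| (eventually_gt_atTop n).mono fun m hm => ?_
    rw [fracDeltaSeq_cBasis hα, if_neg hm.ne']
  · simpa only [deltaNorm_sub_sum_mul_cBasis hα] using tendsto_iSup_abs_sub_truncation hx
  · simp only [deltaNorm_sub_sum_mul_cBasis hα] at hl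
    exact eq_of_tendsto_iSup_abs_sub_truncation hx hl
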